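/- Let A = A_q^a be a quantum complete intersection over a field k. If ∏_{i=1}^{c} q_{iw}^{a_i − 1} = 1 for every w with 1 ≤ w ≤ c, then A is a symmetric algebra: the functional φ taking the coefficient of x_c^{a_c−1}⋯x_1^{a_1−1} in the monomial basis satisfies φ(xy) = φ(yx) for all x, y ∈ A, and the bilinear form (x,y) ↦ φ(xy) is nondegenerate. -/

import Mathlib

/-!
If `∏_i q_{iw}^{a_i-1} = 1` for every `w`, then the quantum complete intersection
`A_q^a` is a symmetric algebra: the socle-coefficient functional `φ` is a trace form
(`φ(xy) = φ(yx)`) with nondegenerate associated bilinear form.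
-/

noncomputable section

/-- The defining relations of the quantum complete intersection `A_q^a`:
`X_i ^ (a i) = 0` and `X_i * X_j = q i j • (X_j * X_i)`. -/
def qciRel (k : Type) [Field k] (c : ℕ) (q : Fin c → Fin c → k) (a : Fin c → ℕ) :
    FreeAlgebra k (Fin c) → FreeAlgebra k (Fin c) → Prop := fun x y =>
  (∃ i, x = FreeAlgebra.ι k i ^ a i ∧ y = 0) ∨
  (∃ i j, x = FreeAlgebra.ι k i * FreeAlgebra.ι k j ∧
    y = q i j • (FreeAlgebra.ι k j * FreeAlgebra.ι k i))

/-- The quantum complete intersection `A_q^a = k⟨X_1,…,X_c⟩/(X_i^{a_i}, X_iX_j - q_{ij}X_jX_i)`. -/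
abbrev QCI (k : Type) [Field k] (c : ℕ) (q : Fin c → Fin c → k) (a : Fin c → ℕ) : Type :=
  RingQuot (qciRel k c q a)

/-- The generator `x_i` of `A_q^a` (the image of `X_i`). -/
def qciX (k : Type) [Field k] {c : ℕ} (q : Fin c → Fin c → k) (a : Fin c → ℕ) (i : Fin c) :
    QCI k c q a :=
  RingQuot.mkAlgHom k (qciRel k c q a) (FreeAlgebra.ι k i)

/-- The descending monomial `x_c^{d_c} ⋯ x_1^{d_1}` in `A_q^a`. -/
def qciDMono (k : Type) [Field k] {c : ℕ} (q : Fin c → Fin c → k) (a : Fin c → ℕ)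
    (d : (i : Fin c) → Fin (a i)) : QCI k c q a :=
  (List.ofFn fun w : Fin c => qciX k q a w.rev ^ (d w.rev : ℕ)).prod

/-!
Up to nonzero scalars, the monomials `m_d = x_c^{d_c} ⋯ x_1^{d_1}` multiply by adding
exponents, so `φ (m_d * m_e) ≠ 0` exactly when `d + e` is the socle exponent; pairing `m_d` with
the complementary monomial gives nondegeneracy. For the trace property it suffices to compare `x_w * m` with `m * x_w` for a
monomial `m` one step below the socle in direction `w`: carrying `x_w` to its place through the
factors on either side of `x_w ^ (a_w - 2)` produces the scalars `∏_{v > w} q_{wv}^{a_v - 1}` and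
`∏_{v < w} q_{vw}^{a_v - 1}`, whose ratio is `∏_v q_{vw}^{a_v - 1} = 1`.
-/

section OrderedMonomial

variable {k R ι : Type*} [CommSemiring k] [Semiring R] [Algebra k R]

theorem pow_mul_pow_eq_smul_of_mul_eq_smul {x y : R} {s : k} (h : x * y = s • (y * x))
    (m n : ℕ) : x ^ m * y ^ n = s ^ (m * n) • (y ^ n * x ^ m) := by
  have hy : ∀ n : ℕ, x * y ^ n = s ^ n • (y ^ n * x) := by
    intro n
    induction n with
    | zero => simp
    | succ n ih =>
      rw [pow_succ, ← mul_assoc, ih, smul_mul_assoc, mul_assoc, h, mul_smul_comm, smul_smul,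
        ← mul_assoc, ← pow_succ, ← pow_succ]
  induction m with
  | zero => simp
  | succ m ih =>
    rw [pow_succ, mul_assoc, hy, mul_smul_comm, ← mul_assoc, ih, smul_mul_assoc, smul_smul,
      ← pow_add, mul_assoc, ← pow_succ, Nat.succ_mul, add_comm (m * n)]

theorem mul_list_prod_map_eq_smul (x : R) (f : ι → R) (s : ι → k) {l : List ι}
    (h : ∀ i ∈ l, x * f i = s i • (f i * x)) :
    x * (l.map f).prod = (l.map s).prod • ((l.map f).prod * x) := by
  induction l with
  | nil => simp
  | cons i l ih =>
    rw [List.forall_mem_cons] at h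
    simp only [List.map_cons, List.prod_cons]
    rw [← mul_assoc, h.1, smul_mul_assoc, mul_assoc, ih h.2, mul_smul_comm, smul_smul,
      mul_assoc]

theorem list_prod_map_mul_eq_smul (x : R) (f : ι → R) (s : ι → k) {l : List ι}
    (h : ∀ i ∈ l, f i * x = s i • (x * f i)) :
    (l.map f).prod * x = (l.map s).prod • (x * (l.map f).prod) := by
  induction l with
  | nil => simp
  | cons i l ih =>
    rw [List.forall_mem_cons] at h
    simp only [List.map_cons, List.prod_cons]
    rw [mul_assoc, ih h.2, mul_smul_comm, ← mul_assoc, h.1, smul_mul_assoc, smul_smul,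
      mul_assoc, mul_comm (s i)]

def orderedMonomial (x : ι → R) (L : List ι) (d : ι → ℕ) : R :=
  (L.map fun v => x v ^ d v).prod

variable {x : ι → R} {q : ι → ι → k}

theorem orderedMonomial_update_of_notMem [DecidableEq ι] {l : List ι} {w : ι} (hw : w ∉ l)
    (d : ι → ℕ) (n : ℕ) : orderedMonomial x l (Function.update d w n) = orderedMonomial x l d := by
  refine congrArg List.prod (List.map_congr_left fun v hv => ?_)
  rw [Function.update_of_ne (ne_of_mem_of_not_mem hv hw)]

theorem orderedMonomial_append_cons (l₁ l₂ : List ι) (w : ι) (d : ι → ℕ) :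
    orderedMonomial x (l₁ ++ w :: l₂) d =
      orderedMonomial x l₁ d * (x w ^ d w * orderedMonomial x l₂ d) := by
  simp [orderedMonomial]

theorem orderedMonomial_mul_orderedMonomial (hx : ∀ i j, x i * x j = q i j • (x j * x i))
    (hq : ∀ i j, IsUnit (q i j)) (L : List ι) (d e : ι → ℕ) :
    ∃ s : k, IsUnit s ∧
      orderedMonomial x L d * orderedMonomial x L e = s • orderedMonomial x L (d + e) := by
  induction L with
  | nil => exact ⟨1, isUnit_one, by simp [orderedMonomial]⟩
  | cons v L ih =>
    obtain ⟨s, hs, hmul⟩ := ih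
    have hcomm := list_prod_map_mul_eq_smul (x v ^ e v) (fun u => x u ^ d u)
      (fun u => q u v ^ (d u * e v)) (l := L)
      fun u _ => pow_mul_pow_eq_smul_of_mul_eq_smul (hx u v) _ _
    refine ⟨(L.map fun u => q u v ^ (d u * e v)).prod * s, (List.prod_isUnit ?_).mul hs, ?_⟩
    · simp only [List.mem_map]
      rintro _ ⟨u, -, rfl⟩
      exact (hq u v).pow _
    · simp only [orderedMonomial, List.map_cons, List.prod_cons, Pi.add_apply] at hmul ⊢
      rw [mul_assoc, ← mul_assoc _ (x v ^ e v), hcomm, smul_mul_assoc, mul_smul_comm,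
        ← mul_assoc (x v ^ d v), ← mul_assoc (x v ^ d v), ← pow_add, mul_assoc, hmul,
        mul_smul_comm, smul_smul]

section Split

variable [DecidableEq ι] (hx : ∀ i j, x i * x j = q i j • (x j * x i))
  {L l₁ l₂ : List ι} {w : ι} (hL : L = l₁ ++ w :: l₂) (h₁ : w ∉ l₁) (h₂ : w ∉ l₂)
include hx hL h₁ h₂

theorem mul_orderedMonomial_of_eq_append (d : ι → ℕ) :
    x w * orderedMonomial x L d = (l₁.map fun v => q w v ^ d v).prod •
      orderedMonomial x L (Function.update d w (d w + 1)) := by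
  have hcomm : ∀ v ∈ l₁, x w * x v ^ d v = q w v ^ d v • (x v ^ d v * x w) := fun v _ => by
    simpa using pow_mul_pow_eq_smul_of_mul_eq_smul (hx w v) 1 (d v)
  subst hL
  rw [orderedMonomial_append_cons, orderedMonomial_append_cons,
    orderedMonomial_update_of_notMem h₁, orderedMonomial_update_of_notMem h₂,
    Function.update_self, ← mul_assoc]
  unfold orderedMonomial
  rw [mul_list_prod_map_eq_smul _ _ _ hcomm, smul_mul_assoc, mul_assoc, ← mul_assoc (x w),
    ← pow_succ']

theorem orderedMonomial_mul_of_eq_append (d : ι → ℕ) :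
    orderedMonomial x L d * x w = (l₂.map fun v => q v w ^ d v).prod •
      orderedMonomial x L (Function.update d w (d w + 1)) := by
  have hcomm : ∀ v ∈ l₂, x v ^ d v * x w = q v w ^ d v • (x w * x v ^ d v) := fun v _ => by
    simpa using pow_mul_pow_eq_smul_of_mul_eq_smul (hx v w) (d v) 1
  subst hL
  rw [orderedMonomial_append_cons, orderedMonomial_append_cons,
    orderedMonomial_update_of_notMem h₁, orderedMonomial_update_of_notMem h₂,
    Function.update_self, mul_assoc, mul_assoc]
  unfold orderedMonomial
  rw [list_prod_map_mul_eq_smul _ _ _ hcomm, mul_smul_comm, mul_smul_comm, ← mul_assoc (x w ^ d w),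
    ← pow_succ]

end Split

theorem map_mul_orderedMonomial_comm [Fintype ι] [DecidableEq ι]
    (hx : ∀ i j, x i * x j = q i j • (x j * x i))
    (hqd : ∀ i, q i i = 1) (hqc : ∀ i j, q i j * q j i = 1)
    {L : List ι} (hL : L.Nodup) (hmem : ∀ i, i ∈ L)
    {φ : R →ₗ[k] k} {t : ι → ℕ} (hφ : ∀ d, φ (orderedMonomial x L d) ≠ 0 → d = t)
    (ht : ∀ w, ∏ i, q i w ^ t i = 1) (w : ι) (d : ι → ℕ) :
    φ (x w * orderedMonomial x L d) = φ (orderedMonomial x L d * x w) := by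
  obtain ⟨l₁, l₂, hsplit⟩ := List.append_of_mem (hmem w)
  have hnd := List.nodup_cons.1 (List.nodup_middle.1 (hsplit ▸ hL))
  have h₁ : w ∉ l₁ := fun h => hnd.1 (List.mem_append_left _ h)
  have h₂ : w ∉ l₂ := fun h => hnd.1 (List.mem_append_right _ h)
  rw [mul_orderedMonomial_of_eq_append hx hsplit h₁ h₂,
    orderedMonomial_mul_of_eq_append hx hsplit h₁ h₂, map_smul, map_smul]
  by_cases hC : φ (orderedMonomial x L (Function.update d w (d w + 1))) = 0
  · rw [hC, smul_zero, smul_zero]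
  have hd : ∀ v ∈ l₁ ++ l₂, d v = t v := fun v hv => by
    simpa [Function.update_of_ne (ne_of_mem_of_not_mem hv hnd.1)] using congrFun (hφ _ hC) v
  congr 1
  set F := fun v => q v w ^ t v
  have hF : (l₁.map F).prod * (l₂.map F).prod = 1 := by
    have huniv : L.toFinset = Finset.univ := Finset.eq_univ_of_forall fun i =>
      List.mem_toFinset.2 (hmem i)
    rw [← ht w, ← huniv, List.prod_toFinset _ hL, hsplit]
    simp [F, hqd]
  have hinv : (l₁.map fun v => q w v ^ t v).prod * (l₁.map F).prod = 1 := by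
    simp [F, ← List.prod_map_mul, ← mul_pow, hqc]
  have e₁ : l₁.map (fun v => q w v ^ d v) = l₁.map fun v => q w v ^ t v :=
    List.map_congr_left fun v hv => by rw [hd v (List.mem_append_left _ hv)]
  have e₂ : l₂.map (fun v => q v w ^ d v) = l₂.map F :=
    List.map_congr_left fun v hv => by rw [hd v (List.mem_append_right _ hv)]
  rw [e₁, e₂]
  exact left_inv_eq_right_inv hinv hF

end OrderedMonomial

theorem LinearMap.map_mul_comm_of_adjoin_eq_top {k R : Type*} [CommSemiring k] [Semiring R]
    [Algebra k R] (φ : R →ₗ[k] k) {s : Set R} (hs : Algebra.adjoin k s = ⊤)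
    (h : ∀ g ∈ s, ∀ x, φ (g * x) = φ (x * g)) (x y : R) : φ (x * y) = φ (y * x) := by
  induction (hs ▸ Algebra.mem_top : y ∈ Algebra.adjoin k s) using Algebra.adjoin_induction
    generalizing x with
  | mem g hg => exact (h g hg x).symm
  | algebraMap r => rw [Algebra.commutes]
  | add y z _ _ hy hz => rw [mul_add, add_mul, map_add, map_add, hy, hz]
  | mul y z _ _ hy hz =>
    calc φ (x * (y * z)) = φ (z * (x * y)) := by rw [← mul_assoc, hz]
      _ = φ (y * (z * x)) := by rw [← mul_assoc, hy]
      _ = φ (y * z * x) := by rw [mul_assoc]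

theorem Module.Basis.eq_zero_of_forall_map_mul_eq_zero {k R ι : Type*} [CommSemiring k]
    [NoZeroDivisors k] [Semiring R] [Algebra k R] [Fintype ι] (b : Module.Basis ι k R)
    (φ : R →ₗ[k] k) (e : ι → ι) (he : ∀ i j, φ (b i * b (e j)) ≠ 0 ↔ i = j) {x : R}
    (hx : ∀ y, φ (x * y) = 0) : x = 0 := by
  refine b.ext_elem fun j => ?_
  have hpair : φ (x * b (e j)) = b.repr x j * φ (b j * b (e j)) := by
    conv_lhs => rw [← b.sum_repr x]
    rw [Finset.sum_mul, map_sum, Finset.sum_eq_single j]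
    · rw [smul_mul_assoc, map_smul, smul_eq_mul]
    · intro i _ hij
      rw [smul_mul_assoc, map_smul, not_not.1 (mt (he i j).1 hij), smul_zero]
    · simp
  rw [map_zero, Finsupp.zero_apply]
  exact (mul_eq_zero.1 (hpair.symm.trans (hx _))).resolve_right ((he j j).2 rfl)

section QCI

variable {k : Type} [Field k] {c : ℕ} {q : Fin c → Fin c → k} {a : Fin c → ℕ}

theorem qciX_pow_eq_zero (i : Fin c) : qciX k q a i ^ a i = 0 := by
  simpa [qciX] using RingQuot.mkAlgHom_rel k (s := qciRel k c q a) (Or.inl ⟨i, rfl, rfl⟩)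

theorem qciX_mul_qciX (i j : Fin c) :
    qciX k q a i * qciX k q a j = q i j • (qciX k q a j * qciX k q a i) := by
  simpa [qciX] using RingQuot.mkAlgHom_rel k (s := qciRel k c q a) (Or.inr ⟨i, j, rfl, rfl⟩)

theorem adjoin_range_qciX : Algebra.adjoin k (Set.range (qciX k q a)) = ⊤ := by
  rw [show Set.range (qciX k q a) = RingQuot.mkAlgHom k _ '' Set.range (FreeAlgebra.ι k) by
      rw [← Set.range_comp]; rfl, Algebra.adjoin_image, FreeAlgebra.adjoin_range_ι, Algebra.map_top,
    AlgHom.range_eq_top]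
  exact RingQuot.mkAlgHom_surjective k _

theorem qciDMono_eq_orderedMonomial (d : (i : Fin c) → Fin (a i)) :
    qciDMono k q a d = orderedMonomial (qciX k q a) (List.ofFn Fin.rev) fun i => d i := by
  rw [qciDMono, orderedMonomial, List.map_ofFn]
  rfl

theorem coord_orderedMonomial_qciX (b : Module.Basis ((i : Fin c) → Fin (a i)) k (QCI k c q a))
    (hb : ∀ d, b d = qciDMono k q a d) (t : (i : Fin c) → Fin (a i)) (d : Fin c → ℕ) :
    b.coord t (orderedMonomial (qciX k q a) (List.ofFn Fin.rev) d) =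
      if d = fun i => (t i : ℕ) then 1 else 0 := by
  by_cases hd : ∀ i, d i < a i
  · rw [show orderedMonomial (qciX k q a) (List.ofFn Fin.rev) d = b fun i => ⟨d i, hd i⟩ by
      rw [hb, qciDMono_eq_orderedMonomial], b.coord_apply, b.repr_self, Finsupp.single_apply]
    simp [funext_iff, Fin.ext_iff, eq_comm]
  · simp only [not_forall, not_lt] at hd
    obtain ⟨i, hi⟩ := hd
    have hzero : orderedMonomial (qciX k q a) (List.ofFn Fin.rev) d = 0 :=
      List.prod_eq_zero (List.mem_map.2 ⟨i, List.mem_ofFn.2 ⟨i.rev, Fin.rev_rev i⟩,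
        pow_eq_zero_of_le hi (qciX_pow_eq_zero i)⟩)
    rw [hzero, map_zero, if_neg fun h => by have := congrFun h i; have := (t i).isLt; omega]

theorem coord_basis_mul_basis_rev_ne_zero_iff (hqc : ∀ i j, q i j * q j i = 1)
    (b : Module.Basis ((i : Fin c) → Fin (a i)) k (QCI k c q a))
    (hb : ∀ d, b d = qciDMono k q a d) {t : (i : Fin c) → Fin (a i)}
    (ht : ∀ i, (t i : ℕ) = a i - 1) (d e : (i : Fin c) → Fin (a i)) :
    b.coord t (b d * b fun i => (e i).rev) ≠ 0 ↔ d = e := by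
  obtain ⟨s, hs, hmul⟩ := orderedMonomial_mul_orderedMonomial qciX_mul_qciX
    (fun i j => IsUnit.of_mul_eq_one _ (hqc i j)) (List.ofFn Fin.rev)
    (fun i => (d i : ℕ)) (fun i => ((e i).rev : ℕ))
  rw [hb, hb, qciDMono_eq_orderedMonomial, qciDMono_eq_orderedMonomial, hmul, map_smul,
    coord_orderedMonomial_qciX b hb, smul_eq_mul, mul_ne_zero_iff]
  simp only [ne_eq, ite_eq_right_iff, hs.ne_zero, not_false_eq_true, one_ne_zero, imp_false, not_not, true_and,
    funext_iff, Pi.add_apply, Fin.val_rev, ht, Fin.ext_iff]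
  exact forall_congr' fun i => by have := (d i).isLt; have := (e i).isLt; omega

end QCI

theorem qci_symmetric_of_products_one
    (k : Type) [Field k] (c : ℕ)
    (q : Fin c → Fin c → k) (a : Fin c → ℕ)
    (hqd : ∀ i, q i i = 1) (hqc : ∀ i j, q i j * q j i = 1) (ha : ∀ i, 2 ≤ a i)
    -- the descending monomials form a k-basis of A
    (b : Module.Basis ((i : Fin c) → Fin (a i)) k (QCI k c q a))
    (hb : ∀ d, b d = qciDMono k q a d)
    -- φ is the coefficient of the socle monomial x_c^{a_c-1} ⋯ x_1^{a_1-1}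
    (φ : QCI k c q a →ₗ[k] k)
    (hφ : φ = b.coord fun i => ⟨a i - 1, by have := ha i; omega⟩)
    -- the condition on the commutators
    (h1 : ∀ w : Fin c, (∏ i : Fin c, q i w ^ (a i - 1)) = 1) :
    (∀ x y : QCI k c q a, φ (x * y) = φ (y * x)) ∧
    (∀ x : QCI k c q a, (∀ y : QCI k c q a, φ (x * y) = 0) → x = 0) ∧
    (∀ y : QCI k c q a, (∀ x : QCI k c q a, φ (x * y) = 0) → y = 0) := by
  have hsocle : ∀ d, φ (orderedMonomial (qciX k q a) (List.ofFn Fin.rev) d) ≠ 0 →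
      d = fun i => a i - 1 := fun d hd => by
    rw [hφ, coord_orderedMonomial_qciX b hb] at hd
    by_contra h
    exact hd (if_neg h)
  have hgen : ∀ w x, φ (qciX k q a w * x) = φ (x * qciX k q a w) := fun w =>
    LinearMap.congr_fun (b.ext (f₁ := φ ∘ₗ LinearMap.mulLeft k (qciX k q a w))
      (f₂ := φ ∘ₗ LinearMap.mulRight k (qciX k q a w)) fun d => by
        simpa [hb, qciDMono_eq_orderedMonomial] using
          map_mul_orderedMonomial_comm qciX_mul_qciX hqd hqc
            (List.nodup_ofFn.2 Fin.rev_injective)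
            (fun i => List.mem_ofFn.2 ⟨i.rev, Fin.rev_rev i⟩) hsocle h1 w _)
  have htrace := φ.map_mul_comm_of_adjoin_eq_top adjoin_range_qciX
    (by rintro _ ⟨w, rfl⟩; exact hgen w)
  have hleft : ∀ x, (∀ y, φ (x * y) = 0) → x = 0 := fun x =>
    b.eq_zero_of_forall_map_mul_eq_zero φ (fun e i => (e i).rev)
      (hφ ▸ coord_basis_mul_basis_rev_ne_zero_iff hqc b hb fun _ => rfl)
  exact ⟨htrace, hleft, fun y hy => hleft y fun x => (htrace y x).trans (hy x)⟩
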